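/- Corollary 1 (variable capacity): The optimal total profit is a nondecreasing function of the starting reputation: if 0 ≤ R_1 ≤ R̂_1 ≤ 1, then max over all advertisement sequences A ∈ {L,H}^N of Π(A, R_1) is at most max over all advertisement sequences A ∈ {L,H}^N of Π(A, R̂_1). -/

import Mathlib

/-!
Keep the advertisement sequence and only raise the starting reputation. Every stage of the
dynamics is monotone in the reputation on `(-∞, 1]`: the advertising map `R ↦ R + (1 - R) a^α`
(as `a^α ≤ 1`), the demand `x ↦ Λ (1 - q / x)⁺` (as `q ≥ 0`), and the update
`R' ↦ (1 - w) R' + w`, applied only when demand is positive: it never lowers a reputation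
`R' ≤ 1`, so switching it on at the higher reputation preserves the order. By induction the
whole trajectory dominates the original one, and with it every period's profit.
-/

noncomputable section

/-- Post-advertisement reputation map. -/
def frep (α R a : ℝ) : ℝ := R + (1 - R) * a ^ α

/-- Demand function. -/
def dem (Λ q x : ℝ) : ℝ := if 0 < x then max 0 (Λ * (1 - q / x)) else 0

/-- Full-fill reputation trajectory (0-indexed periods). -/
def rep (α w Λ q : ℝ) (A : ℕ → ℝ) (R1 : ℝ) : ℕ → ℝ
  | 0 => R1
  | i + 1 =>
      let R' := frep α (rep α w Λ q A R1 i) (A i)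
      if 0 < dem Λ q R' then (1 - w) * R' + w else R'

/-- Full-fill total profit over horizon `N`. -/
def profit (α w Λ q p c cA : ℝ) (A : ℕ → ℝ) (R1 : ℝ) (N : ℕ) : ℝ :=
  ∑ i ∈ Finset.range N,
    ((p - c) * dem Λ q (frep α (rep α w Λ q A R1 i) (A i)) - cA * A i)

section Monotonicity

variable {α w Λ q : ℝ}

theorem frep_mono (hα : 0 ≤ α) {a : ℝ} (ha0 : 0 ≤ a) (ha1 : a ≤ 1) :
    Monotone (frep α · a) := by
  intro x y hxy
  have : a ^ α ≤ 1 := Real.rpow_le_one ha0 ha1 hα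
  simp only [frep]
  nlinarith

theorem frep_le_one (hα : 0 ≤ α) {a R : ℝ} (ha0 : 0 ≤ a) (ha1 : a ≤ 1) (hR : R ≤ 1) :
    frep α R a ≤ 1 := by
  have : a ^ α ≤ 1 := Real.rpow_le_one ha0 ha1 hα
  simp only [frep]
  nlinarith

theorem dem_nonneg (x : ℝ) : 0 ≤ dem Λ q x := by
  unfold dem
  split
  · exact le_max_left _ _
  · exact le_rfl

theorem dem_mono (hΛ : 0 ≤ Λ) (hq : 0 ≤ q) : Monotone (dem Λ q) := by
  intro x y hxy
  by_cases hx : 0 < x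
  · have hy : 0 < y := hx.trans_le hxy
    simp only [dem, if_pos hx, if_pos hy]
    have : q / y ≤ q / x := div_le_div_of_nonneg_left hq hx hxy
    gcongr
  · simp only [dem, if_neg hx]
    exact dem_nonneg y

def reinforce (w Λ q R : ℝ) : ℝ := if 0 < dem Λ q R then (1 - w) * R + w else R

theorem rep_succ (A : ℕ → ℝ) (R1 : ℝ) (i : ℕ) :
    rep α w Λ q A R1 (i + 1) = reinforce w Λ q (frep α (rep α w Λ q A R1 i) (A i)) :=
  rfl

theorem reinforce_le_one (hw1 : w ≤ 1) {R : ℝ} (hR : R ≤ 1) : reinforce w Λ q R ≤ 1 := by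
  unfold reinforce
  split <;> nlinarith

theorem reinforce_le_reinforce (hΛ : 0 ≤ Λ) (hq : 0 ≤ q) (hw0 : 0 ≤ w) (hw1 : w ≤ 1)
    {x y : ℝ} (hxy : x ≤ y) (hy : y ≤ 1) : reinforce w Λ q x ≤ reinforce w Λ q y := by
  unfold reinforce
  by_cases hdx : 0 < dem Λ q x
  · have hdy : 0 < dem Λ q y := hdx.trans_le (dem_mono hΛ hq hxy)
    rw [if_pos hdx, if_pos hdy]
    nlinarith
  · rw [if_neg hdx]
    split <;> nlinarith

variable {A : ℕ → ℝ} (hα : 0 ≤ α) (hA0 : ∀ i, 0 ≤ A i) (hA1 : ∀ i, A i ≤ 1)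
include hα hA0 hA1

theorem rep_le_one (hw1 : w ≤ 1) {R1 : ℝ} (hR1 : R1 ≤ 1) (i : ℕ) :
    rep α w Λ q A R1 i ≤ 1 := by
  induction i with
  | zero => exact hR1
  | succ i ih =>
    rw [rep_succ]
    exact reinforce_le_one hw1 (frep_le_one hα (hA0 i) (hA1 i) ih)

theorem rep_le_rep (hΛ : 0 ≤ Λ) (hq : 0 ≤ q) (hw0 : 0 ≤ w) (hw1 : w ≤ 1)
    {R1 R2 : ℝ} (hle : R1 ≤ R2) (hR2 : R2 ≤ 1) (i : ℕ) :
    rep α w Λ q A R1 i ≤ rep α w Λ q A R2 i := by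
  induction i with
  | zero => exact hle
  | succ i ih =>
    rw [rep_succ, rep_succ]
    exact reinforce_le_reinforce hΛ hq hw0 hw1 (frep_mono hα (hA0 i) (hA1 i) ih)
      (frep_le_one hα (hA0 i) (hA1 i) (rep_le_one hα hA0 hA1 hw1 hR2 i))

theorem profit_le_profit (hΛ : 0 ≤ Λ) (hq : 0 ≤ q) (hw0 : 0 ≤ w) (hw1 : w ≤ 1)
    {p c : ℝ} (hcp : c ≤ p) (cA : ℝ) {R1 R2 : ℝ} (hle : R1 ≤ R2) (hR2 : R2 ≤ 1) (N : ℕ) :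
    profit α w Λ q p c cA A R1 N ≤ profit α w Λ q p c cA A R2 N := by
  refine Finset.sum_le_sum fun i _ => ?_
  have hdem := dem_mono hΛ hq <|
    frep_mono hα (hA0 i) (hA1 i) (rep_le_rep hα hA0 hA1 hΛ hq hw0 hw1 hle hR2 i)
  gcongr ?_ - _
  exact mul_le_mul_of_nonneg_left hdem (sub_nonneg.mpr hcp)

end Monotonicity

theorem optimal_profit_monotone_in_initial_reputation_general
    (Λ c p cA m u α w L H q : ℝ) (N : ℕ)
    (hΛ : 0 < Λ) (hc : 0 < c) (hcp : c < p)
    (hm : 0 < m) (hu : 0 ≤ u) (hqdef : q = (u + p) / m)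
    (hα : 0 < α) (hw0 : 0 ≤ w) (hw1 : w ≤ 1)
    (hL0 : 0 ≤ L) (hLH : L < H) (hH1 : H ≤ 1)
    (R1 Rhat1 : ℝ) (hle : R1 ≤ Rhat1) (hRhat1 : Rhat1 ≤ 1) :
    ∀ A : ℕ → ℝ, (∀ i, A i = L ∨ A i = H) →
      ∃ B : ℕ → ℝ, (∀ i, B i = L ∨ B i = H) ∧
        profit α w Λ q p c cA A R1 N ≤ profit α w Λ q p c cA B Rhat1 N := by
  intro A hA
  have hq : 0 ≤ q := hqdef ▸ div_nonneg (by linarith) hm.le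
  have hA0 : ∀ i, 0 ≤ A i := fun i => by rcases hA i with h | h <;> rw [h] <;> linarith
  have hA1 : ∀ i, A i ≤ 1 := fun i => by rcases hA i with h | h <;> rw [h] <;> linarith
  exact ⟨A, hA, profit_le_profit hα.le hA0 hA1 hΛ.le hq hw0 hw1 hcp.le cA hle hRhat1 N⟩

/-- Corollary 1: the optimal full-fill total profit is nondecreasing in the
starting reputation (the maximum over advertisement sequences in `{L,H}` at
`R1` is at most that at `R̂1`). -/
theorem optimal_profit_monotone_in_initial_reputation
    (Λ c p cA m u α w L H q : ℝ) (N : ℕ)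
    (hΛ : 0 < Λ) (hc : 0 < c) (hcp : c < p) (hcA : 0 ≤ cA)
    (hm : 0 < m) (hu : 0 ≤ u) (hqdef : q = (u + p) / m) (hq1 : q < 1)
    (hα : 0 < α) (hw0 : 0 ≤ w) (hw1 : w ≤ 1)
    (hL0 : 0 ≤ L) (hLH : L < H) (hH1 : H ≤ 1)
    (R1 Rhat1 : ℝ) (hR10 : 0 ≤ R1) (hle : R1 ≤ Rhat1) (hRhat1 : Rhat1 ≤ 1) :
    ∀ A : ℕ → ℝ, (∀ i, A i = L ∨ A i = H) →
      ∃ B : ℕ → ℝ, (∀ i, B i = L ∨ B i = H) ∧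
        profit α w Λ q p c cA A R1 N ≤ profit α w Λ q p c cA B Rhat1 N :=
  optimal_profit_monotone_in_initial_reputation_general Λ c p cA m u α w L H q N hΛ hc hcp hm hu
    hqdef hα hw0 hw1 hL0 hLH hH1 R1 Rhat1 hle hRhat1
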